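/- arXiv:2406.15440 — 6 statements merged into one kernel-verified Lean document; each statement's English description precedes it below -/
import Mathlib

section
/- Let A be a Volterra-Lyapunov stable real n×n matrix, i.e., there exists a positive diagonal matrix D with AD + DAᵀ positive definite. Then for every positive diagonal matrix D', every eigenvalue of AD' has positive real part. -/
/-!
Write `D = diagonal d`, `D' = diagonal d'` and let `A D' v = μ v` with `v ≠ 0`. Since
`A D' = (A D)(D⁻¹ D')`, the vector `x = D⁻¹ D' v` satisfies `(A D) x = μ v`. Pairing with `x`,
`x* (A D) x = μ · Σᵢ (d'ᵢ / dᵢ) |vᵢ|²`, a positive real multiple of `μ`, while the real part of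
`x* (A D) x` is the sum of the quadratic forms of `A D` at `Re x` and `Im x`, which is positive
because the symmetric part `A D + D Aᵀ` of `A D` is positive definite.
-/

open Matrix

section

variable {ι : Type*} [Fintype ι]

lemma dotProduct_transpose_mulVec_self {α : Type*} [CommSemiring α] (M : Matrix ι ι α)
    (y : ι → α) : y ⬝ᵥ Mᵀ *ᵥ y = y ⬝ᵥ M *ᵥ y := by
  rw [dotProduct_mulVec, vecMul_transpose, dotProduct_comm]

lemma dotProduct_add_transpose_mulVec_self {α : Type*} [CommSemiring α] (M : Matrix ι ι α)
    (y : ι → α) : y ⬝ᵥ (M + Mᵀ) *ᵥ y = 2 * (y ⬝ᵥ M *ᵥ y) := by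
  rw [add_mulVec, dotProduct_add, dotProduct_transpose_mulVec_self, two_mul]

lemma re_star_dotProduct_map_ofReal_mulVec (M : Matrix ι ι ℝ) (x : ι → ℂ) :
    (star x ⬝ᵥ M.map ((↑) : ℝ → ℂ) *ᵥ x).re =
      (Complex.re ∘ x) ⬝ᵥ M *ᵥ (Complex.re ∘ x) + (Complex.im ∘ x) ⬝ᵥ M *ᵥ (Complex.im ∘ x) := by
  simp only [dotProduct, mulVec, Finset.mul_sum, Complex.re_sum, ← Finset.sum_add_distrib]
  refine Finset.sum_congr rfl fun i _ => Finset.sum_congr rfl fun j _ => ?_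
  simp [Complex.mul_re, Complex.mul_im]

lemma re_star_dotProduct_map_ofReal_mulVec_pos {M : Matrix ι ι ℝ} (hM : (M + Mᵀ).PosDef)
    {x : ι → ℂ} (hx : x ≠ 0) : 0 < (star x ⬝ᵥ M.map ((↑) : ℝ → ℂ) *ᵥ x).re := by
  have hpos {y : ι → ℝ} (hy : y ≠ 0) : 0 < y ⬝ᵥ M *ᵥ y := by
    simpa [dotProduct_add_transpose_mulVec_self] using hM.dotProduct_mulVec_pos hy
  have hnonneg (y : ι → ℝ) : 0 ≤ y ⬝ᵥ M *ᵥ y := by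
    simpa [dotProduct_add_transpose_mulVec_self] using hM.posSemidef.dotProduct_mulVec_nonneg y
  rw [re_star_dotProduct_map_ofReal_mulVec]
  by_cases hre : Complex.re ∘ x = 0
  · have him : Complex.im ∘ x ≠ 0 := fun him =>
      hx (funext fun i => Complex.ext (congrFun hre i) (congrFun him i))
    linarith [hnonneg (Complex.re ∘ x), hpos him]
  · linarith [hpos hre, hnonneg (Complex.im ∘ x)]

variable [DecidableEq ι]

theorem re_pos_of_mul_diagonal_mulVec_eq_smul {M : Matrix ι ι ℝ}
    (hM : (M + Mᵀ).PosDef) {w : ι → ℝ} (hw : ∀ i, 0 < w i) {μ : ℂ} {v : ι → ℂ} (hv : v ≠ 0)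
    (h : (M * diagonal w).map ((↑) : ℝ → ℂ) *ᵥ v = μ • v) : 0 < μ.re := by
  set x : ι → ℂ := fun i => w i * v i
  have hx : x ≠ 0 := fun hx => hv (funext fun i => by
    simpa [x, (hw i).ne'] using congrFun hx i)
  have hMx : M.map ((↑) : ℝ → ℂ) *ᵥ x = μ • v := by
    rw [← h]
    ext i
    simp [mulVec, dotProduct, mul_diagonal, x, mul_assoc]
  have hxv : star x ⬝ᵥ v = ((∑ i, w i * Complex.normSq (v i) : ℝ) : ℂ) := by
    push_cast
    refine Finset.sum_congr rfl fun i _ => ?_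
    simp [x, Complex.normSq_eq_conj_mul_self]
    ring
  have hsum : 0 < ∑ i, w i * Complex.normSq (v i) := by
    obtain ⟨i, hi⟩ := Function.ne_iff.mp hv
    exact Finset.sum_pos' (fun j _ => mul_nonneg (hw j).le (Complex.normSq_nonneg _))
      ⟨i, Finset.mem_univ i, mul_pos (hw i) (Complex.normSq_pos.mpr hi)⟩
  have hq := re_star_dotProduct_map_ofReal_mulVec_pos hM hx
  rw [hMx, dotProduct_smul, smul_eq_mul, hxv, Complex.re_mul_ofReal] at hq
  exact pos_of_mul_pos_left hq hsum.le

end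

theorem stmt0 {n : ℕ} (A : Matrix (Fin n) (Fin n) ℝ)
    (hVL : ∃ d : Fin n → ℝ, (∀ i, 0 < d i) ∧
      (A * diagonal d + diagonal d * Aᵀ).PosDef)
    (d' : Fin n → ℝ) (hd' : ∀ i, 0 < d' i)
    (μ : ℂ) (v : Fin n → ℂ) (hv : v ≠ 0)
    (heig : ((A * diagonal d').map (fun x : ℝ => (x : ℂ))).mulVec v = μ • v) :
    0 < μ.re := by
  obtain ⟨d, hd, hS⟩ := hVL
  have hAd' : A * diagonal d' = A * diagonal d * diagonal (fun i => d' i / d i) := by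
    rw [mul_assoc, diagonal_mul_diagonal]
    congr 2
    funext i
    field_simp [(hd i).ne']
  rw [hAd'] at heig
  refine re_pos_of_mul_diagonal_mulVec_eq_smul ?_ (fun i => div_pos (hd' i) (hd i))
    hv heig
  rwa [transpose_mul, diagonal_transpose]
end

section
/- If A is a real n×n matrix and D is a positive diagonal matrix such that AD + DAᵀ is positive definite, then every eigenvalue of A has positive real part. -/
/-!
Write the eigenvector as `v = P u`, possible since `P` is invertible. Then
`u* (A P) u = μ · u* P u`, and adding the conjugate gives
`u* (A P + P Aᴴ) u = 2 Re μ · u* P u`; both quadratic forms are positive, so `Re μ > 0`.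
The real statement is the case `P = D` after complexifying `A`, `D` and `A D + D Aᵀ`.
-/

open Matrix
open scoped ComplexOrder

namespace Matrix

variable {ι : Type*} [Fintype ι]

lemma star_star_dotProduct_mulVec {R : Type*} [CommSemiring R] [StarRing R]
    (B : Matrix ι ι R) (u w : ι → R) :
    star (star u ⬝ᵥ (B *ᵥ w)) = star w ⬝ᵥ (Bᴴ *ᵥ u) := by
  rw [star_dotProduct, star_star, dotProduct_mulVec, ← star_mulVec]

theorem re_pos_of_mulVec_eq_smul_of_posDef {𝕜 : Type*} [RCLike 𝕜] [DecidableEq ι]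
    {A P : Matrix ι ι 𝕜} (hP : P.PosDef) (hS : (A * P + P * Aᴴ).PosDef)
    {μ : 𝕜} {v : ι → 𝕜} (hv : v ≠ 0) (hAv : A *ᵥ v = μ • v) : 0 < RCLike.re μ := by
  obtain ⟨u, rfl⟩ := mulVec_surjective_iff_isUnit.mpr hP.isUnit v
  have hu : u ≠ 0 := by rintro rfl; simp at hv
  set p := star u ⬝ᵥ (P *ᵥ u)
  have hAP : star u ⬝ᵥ ((A * P) *ᵥ u) = μ * p := by
    rw [← mulVec_mulVec, hAv, dotProduct_smul, smul_eq_mul]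
  have hPA : star u ⬝ᵥ ((P * Aᴴ) *ᵥ u) = star (μ * p) := by
    rw [← hAP, star_star_dotProduct_mulVec, conjTranspose_mul, hP.isHermitian.eq]
  obtain ⟨hp_re, hp_im⟩ := RCLike.pos_iff.mp (hP.dotProduct_mulVec_pos hu)
  have hS_re := (RCLike.pos_iff.mp (hS.dotProduct_mulVec_pos hu)).1
  rw [add_mulVec, dotProduct_add, hAP, hPA, map_add, RCLike.star_def, RCLike.conj_re,
    RCLike.mul_re, hp_im, mul_zero, sub_zero] at hS_re
  nlinarith

lemma re_star_dotProduct_map_ofReal_mulVec (M : Matrix ι ι ℝ) (x : ι → ℂ) :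
    (star x ⬝ᵥ (M.map (↑) *ᵥ x)).re =
      (fun i => (x i).re) ⬝ᵥ (M *ᵥ fun i => (x i).re) +
        (fun i => (x i).im) ⬝ᵥ (M *ᵥ fun i => (x i).im) := by
  simp only [dotProduct, mulVec, Finset.mul_sum, Complex.re_sum, ← Finset.sum_add_distrib]
  refine Finset.sum_congr rfl fun i _ => Finset.sum_congr rfl fun j _ => ?_
  simp [Complex.mul_re]

theorem PosDef.map_ofReal {M : Matrix ι ι ℝ} (hM : M.PosDef) :
    (M.map ((↑) : ℝ → ℂ)).PosDef := by
  have hH : (M.map ((↑) : ℝ → ℂ)).IsHermitian :=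
    hM.isHermitian.map _ fun x => by simp
  refine .of_dotProduct_mulVec_pos hH fun x hx => ?_
  refine RCLike.pos_iff.mpr ⟨?_, hH.im_star_dotProduct_mulVec_self x⟩
  have hpos : ∀ a : ι → ℝ, a ≠ 0 → 0 < a ⬝ᵥ (M *ᵥ a) := fun a ha => by
    simpa using hM.dotProduct_mulVec_pos ha
  have hnonneg : ∀ a : ι → ℝ, 0 ≤ a ⬝ᵥ (M *ᵥ a) := fun a => by
    simpa using hM.posSemidef.dotProduct_mulVec_nonneg a
  have hx' : (fun i => (x i).re) ≠ 0 ∨ (fun i => (x i).im) ≠ 0 := by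
    contrapose! hx
    ext i
    exact Complex.ext (congrFun hx.1 i) (congrFun hx.2 i)
  change 0 < (star x ⬝ᵥ (M.map (↑) *ᵥ x)).re
  rw [re_star_dotProduct_map_ofReal_mulVec]
  rcases hx' with h | h
  · exact add_pos_of_pos_of_nonneg (hpos _ h) (hnonneg _)
  · exact add_pos_of_nonneg_of_pos (hnonneg _) (hpos _ h)

end Matrix

theorem stmt2 {n : ℕ} (A : Matrix (Fin n) (Fin n) ℝ)
    (d : Fin n → ℝ) (hd : ∀ i, 0 < d i)
    (hpd : (A * diagonal d + diagonal d * Aᵀ).PosDef)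
    (μ : ℂ) (v : Fin n → ℂ) (hv : v ≠ 0)
    (heig : (A.map (fun x : ℝ => (x : ℂ))).mulVec v = μ • v) :
    0 < μ.re := by
  have hD : (diagonal fun i => (d i : ℂ)).PosDef :=
    posDef_diagonal_iff.mpr fun i => Complex.zero_lt_real.mpr (hd i)
  have hS : A.map (↑) * diagonal (fun i => (d i : ℂ)) + diagonal (fun i => (d i : ℂ)) *
      (A.map (↑))ᴴ = (A * diagonal d + diagonal d * Aᵀ).map ((↑) : ℝ → ℂ) := by
    ext i j
    simp [mul_apply, diagonal_apply]
  exact re_pos_of_mulVec_eq_smul_of_posDef hD (hS ▸ hpd.map_ofReal) hv heig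
end

section
/- If A is a real n×n matrix such that AD + DAᵀ is positive definite for some positive diagonal matrix D, then every principal submatrix of A (obtained by deleting the same set of rows and columns) also satisfies the corresponding Volterra-Lyapunov condition with the corresponding principal submatrix of D, and hence is nonsingular. -/
/-!
The Lyapunov form `A D + D Aᵀ` of a principal submatrix `A[S]` is the principal submatrix
`(A D + D Aᵀ)[S]` (entrywise, `(A D)ᵢⱼ = Aᵢⱼ dⱼ`), so it inherits positive definiteness.
Nonsingularity follows because a vector `v ≠ 0` with `vᵀ A = 0` would make
`vᵀ (A D + D Aᵀ) v = (vᵀ A) D v + vᵀ D (vᵀ A)ᵀ` vanish.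
-/

open Matrix

namespace Matrix

variable {m n R : Type*}

theorem submatrix_mul_diagonal_add_diagonal_mul_transpose [CommRing R] [Fintype m] [Fintype n]
    [DecidableEq m] [DecidableEq n] (A : Matrix n n R) (d : n → R) (e : m → n) :
    (A * diagonal d + diagonal d * Aᵀ).submatrix e e =
      A.submatrix e e * diagonal (d ∘ e) + diagonal (d ∘ e) * (A.submatrix e e)ᵀ := by
  ext i j
  simp [mul_diagonal, diagonal_mul]

theorem det_ne_zero_of_posDef_mul_add_mul_transpose [Fintype n] [DecidableEq n] [Field R]
    [PartialOrder R] [StarRing R] [TrivialStar R] {A B : Matrix n n R}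
    (h : (A * B + B * Aᵀ).PosDef) : A.det ≠ 0 := by
  intro hA
  obtain ⟨v, hv, hvA⟩ := exists_vecMul_eq_zero_iff.mpr hA
  have hAv : Aᵀ *ᵥ v = 0 := by rw [mulVec_transpose, hvA]
  have hform : star v ⬝ᵥ ((A * B + B * Aᵀ) *ᵥ v) = 0 := by
    rw [star_trivial, add_mulVec, dotProduct_add, ← mulVec_mulVec, ← mulVec_mulVec, hAv,
      mulVec_zero, dotProduct_zero, dotProduct_mulVec, hvA, zero_dotProduct, add_zero]
  exact (h.dotProduct_mulVec_pos hv).ne' hform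

end Matrix

theorem stmt3_general {n : ℕ} (A : Matrix (Fin n) (Fin n) ℝ)
    (d : Fin n → ℝ)
    (hpd : (A * diagonal d + diagonal d * Aᵀ).PosDef)
    (S : Finset (Fin n)) :
    let f : {x // x ∈ S} → Fin n := fun i => i.1
    let AS := A.submatrix f f
    (AS * diagonal (fun i => d (f i)) + diagonal (fun i => d (f i)) * ASᵀ).PosDef ∧
      AS.det ≠ 0 := by
  intro f AS
  have hS : (AS * diagonal (d ∘ f) + diagonal (d ∘ f) * ASᵀ).PosDef :=
    submatrix_mul_diagonal_add_diagonal_mul_transpose A d f ▸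
      hpd.submatrix Subtype.val_injective
  exact ⟨hS, det_ne_zero_of_posDef_mul_add_mul_transpose hS⟩

theorem stmt3 {n : ℕ} (A : Matrix (Fin n) (Fin n) ℝ)
    (d : Fin n → ℝ) (hd : ∀ i, 0 < d i)
    (hpd : (A * diagonal d + diagonal d * Aᵀ).PosDef)
    (S : Finset (Fin n)) :
    let f : {x // x ∈ S} → Fin n := fun i => i.1
    let AS := A.submatrix f f
    (AS * diagonal (fun i => d (f i)) + diagonal (fun i => d (f i)) * ASᵀ).PosDef ∧
      AS.det ≠ 0 :=
  stmt3_general A d hpd S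
end

section
/- (Two-group ratio lemma) Let p₁, p₂ be positive integers and let λ^{φ}_{i,j} > 0 for φ ∈ {1,2}, 1 ≤ i ≤ p₁, 1 ≤ j ≤ p₂ be given positive reals. Let k¹_α > 0 for 1 ≤ α ≤ p₁ - 1 and k²_β > 0 for 1 ≤ β ≤ p₂ - 1 be prescribed positive ratios. Then there exist positive reals γ_{i,j} > 0 (1 ≤ i ≤ p₁, 1 ≤ j ≤ p₂) such that (Σ_j λ¹_{1,j} γ_{1,j}) / (Σ_j λ¹_{α+1,j} γ_{α+1,j}) = k¹_α for all α, and (Σ_i λ²_{i,1} γ_{i,1}) / (Σ_i λ²_{i,β+1} γ_{i,β+1}) = k²_β for all β. -/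
theorem stmt8 {p₁ p₂ : ℕ} [NeZero p₁] [NeZero p₂]
    (lam1 : Fin p₁ → Fin p₂ → ℝ) (lam2 : Fin p₁ → Fin p₂ → ℝ)
    (hlam1 : ∀ i j, 0 < lam1 i j) (hlam2 : ∀ i j, 0 < lam2 i j)
    (k1 : Fin p₁ → ℝ) (k2 : Fin p₂ → ℝ)
    (hk1 : ∀ i, i ≠ 0 → 0 < k1 i) (hk2 : ∀ j, j ≠ 0 → 0 < k2 j) :
    ∃ γ : Fin p₁ → Fin p₂ → ℝ, (∀ i j, 0 < γ i j) ∧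
      (∀ i, i ≠ 0 →
        (∑ j, lam1 0 j * γ 0 j) / (∑ j, lam1 i j * γ i j) = k1 i) ∧
      (∀ j, j ≠ 0 →
        (∑ i, lam2 i 0 * γ i 0) / (∑ i, lam2 i j * γ i j) = k2 j) := by
  classical
  have hK1 : ∀ i : Fin p₁, 0 < (if i = 0 then 1 else k1 i) := by
    intro i; split
    · norm_num
    · exact hk1 i ‹_›
  have hK2 : ∀ j : Fin p₂, 0 < (if j = 0 then 1 else k2 j) := by
    intro j; split
    · norm_num
    · exact hk2 j ‹_›
  set r : Fin p₁ → ℝ := fun i => (if i = 0 then 1 else k1 i)⁻¹ with hr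
  have hrpos : ∀ i, 0 < r i := fun i => inv_pos.2 (hK1 i)
  set T : Fin p₂ → ℝ := fun j => ∑ i, lam2 i j / lam1 i j * r i with hT
  have hTpos : ∀ j, 0 < T j := fun j =>
    Finset.sum_pos (fun i _ => mul_pos (div_pos (hlam2 i j) (hlam1 i j)) (hrpos i))
      Finset.univ_nonempty
  set c : Fin p₂ → ℝ := fun j => T 0 / ((if j = 0 then 1 else k2 j) * T j) with hc
  have hcpos : ∀ j, 0 < c j := fun j => div_pos (hTpos 0) (mul_pos (hK2 j) (hTpos j))
  refine ⟨fun i j => r i * c j / lam1 i j,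
    fun i j => div_pos (mul_pos (hrpos i) (hcpos j)) (hlam1 i j), ?_, ?_⟩
  · intro i hi
    have hrow : ∀ i' : Fin p₁, ∑ j, lam1 i' j * (r i' * c j / lam1 i' j) = r i' * ∑ j, c j := by
      intro i'
      rw [Finset.mul_sum]
      refine Finset.sum_congr rfl fun j _ => ?_
      rw [mul_comm, div_mul_cancel₀ _ (hlam1 i' j).ne']
    rw [hrow, hrow]
    have hC : 0 < ∑ j, c j := Finset.sum_pos (fun j _ => hcpos j) Finset.univ_nonempty
    rw [mul_div_mul_right _ _ hC.ne']
    simp [hr, hi]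
  · intro j hj
    have hcol : ∀ j' : Fin p₂, ∑ i, lam2 i j' * (r i * c j' / lam1 i j') = T j' * c j' := by
      intro j'
      rw [hT]
      simp only
      rw [Finset.sum_mul]
      refine Finset.sum_congr rfl fun i _ => ?_
      field_simp
    rw [hcol, hcol]
    have hval : ∀ j' : Fin p₂, T j' * c j' = T 0 / (if j' = 0 then 1 else k2 j') := by
      intro j'
      rw [hc]
      simp only
      rw [← div_div, mul_comm, div_mul_cancel₀ _ (hTpos j').ne']
    rw [hval, hval]
    simp only [if_pos rfl, if_neg hj, if_true, div_one]
    rw [div_div_eq_mul_div, mul_comm, mul_div_assoc, div_self (hTpos 0).ne', mul_one]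
end

section
/- (General ratio lemma, m groups) Let m ≥ 1 and p₁,...,p_m positive integers. Index combinations by tuples κ = (κ₁,...,κ_m) with 1 ≤ κ_φ ≤ p_φ. Given positive reals λ^{φ}_{κ} > 0 for each group index φ and each tuple κ, and prescribed positive ratios k^{φ}_{j} > 0 for 1 ≤ φ ≤ m, 1 ≤ j ≤ p_φ - 1, there exist strictly positive reals γ_κ > 0 such that for every φ and every j, (Σ_{κ : κ_φ = 1} λ^{φ}_{κ} γ_{κ}) / (Σ_{κ : κ_φ = j+1} λ^{φ}_{κ} γ_{κ}) = k^{φ}_{j}, where in the denominator sum the tuple is obtained from κ by replacing its φ-th coordinate by j+1. -/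
/-!
The wanted `γ` are the strictly positive vectors orthogonal to every
`κ ↦ λ^φ_κ ([κ_φ = 0] - k^φ_j [κ_φ = j])`. These all lie in the subspace `V` of functions
`κ ↦ ∑ φ, λ^φ_κ s_φ(κ_φ)` in which every `s_φ` has zero sum against the positive weights
`(1, 1/k^φ_1, …)`, and by Stiemke's theorem it suffices that `V` meets the nonnegative orthant
only in `0`. Each `s_φ` has a nonpositive minimum; evaluating a nonnegative element of `V` at the
tuple of minimisers forces all these minima to vanish, and then `s = 0`.
-/

open Finset

/-- Stiemke's theorem, by separating `V` from the standard simplex. -/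
theorem exists_pos_forall_sum_mul_eq_zero {ι : Type*} [Fintype ι] (V : Submodule ℝ (ι → ℝ))
    (hV : ∀ z ∈ V, 0 ≤ z → z = 0) :
    ∃ γ : ι → ℝ, (∀ i, 0 < γ i) ∧ ∀ z ∈ V, ∑ i, z i * γ i = 0 := by
  classical
  have hdisj : Disjoint (V : Set (ι → ℝ)) (stdSimplex ℝ ι) := by
    refine Set.disjoint_left.2 fun z hzV hz => ?_
    have h1 := hz.2
    rw [hV z hzV hz.1] at h1
    simp at h1
  obtain ⟨f, u, v, hfu, huv, hfv⟩ := geometric_hahn_banach_closed_compact V.convex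
    V.closed_of_finiteDimensional (convex_stdSimplex ℝ ι) (isCompact_stdSimplex ℝ ι) hdisj
  have hu : 0 < u := by simpa using hfu 0 V.zero_mem
  have hfV : ∀ z ∈ V, f z = 0 := by
    intro z hz
    by_contra hne
    have h := hfu ((u / f z) • z) (V.smul_mem _ hz)
    rw [map_smul, smul_eq_mul, div_mul_cancel₀ _ hne] at h
    exact lt_irrefl u h
  refine ⟨fun i => f (Pi.single i 1),
    fun i => hu.trans (huv.trans (hfv _ (single_mem_stdSimplex ℝ i))), fun z hz => ?_⟩
  rw [← hfV z hz]
  conv_rhs => rw [← univ_sum_single z, map_sum]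
  refine sum_congr rfl fun i _ => ?_
  rw [← smul_eq_mul, ← map_smul, ← Pi.single_smul', smul_eq_mul, mul_one]

theorem exists_nonpos_of_sum_mul_eq_zero {β : Type*} [Fintype β] [Nonempty β] {w s : β → ℝ}
    (hw : ∀ t, 0 < w t) (h : ∑ t, w t * s t = 0) : ∃ t, s t ≤ 0 := by
  obtain ⟨t, -, ht⟩ := exists_le_of_sum_le univ_nonempty (h.trans sum_const_zero.symm).le
  exact ⟨t, nonpos_of_mul_nonpos_right ht (hw t)⟩

theorem eq_zero_of_nonneg_of_sum_mul_eq_zero {β : Type*} [Fintype β] {w s : β → ℝ}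
    (hw : ∀ t, 0 < w t) (hs : 0 ≤ s) (h : ∑ t, w t * s t = 0) : s = 0 := by
  have hnn : ∀ t ∈ univ, 0 ≤ w t * s t := fun t _ => mul_nonneg (hw t).le (hs t)
  ext t
  exact (mul_eq_zero.1 ((sum_eq_zero_iff_of_nonneg hnn).1 h t (mem_univ t))).resolve_left
    (hw t).ne'

section CoordSum

variable {ι : Type*} {α : ι → Type*}

def weightedSumZero [∀ i, Fintype (α i)] (w : (i : ι) → α i → ℝ) :
    Submodule ℝ ((i : ι) → α i → ℝ) where
  carrier := {s | ∀ i, ∑ t, w i t * s i t = 0}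
  add_mem' hs hs' i := by simp [mul_add, sum_add_distrib, hs i, hs' i]
  zero_mem' i := by simp
  smul_mem' c s hs i := by simp [mul_left_comm _ c, ← mul_sum, hs i]

variable [Fintype ι]

def coordSum (lam : ι → ((i : ι) → α i) → ℝ) :
    ((i : ι) → α i → ℝ) →ₗ[ℝ] (((i : ι) → α i) → ℝ) where
  toFun s κ := ∑ i, lam i κ * s i (κ i)
  map_add' s s' := by ext κ; simp [mul_add, sum_add_distrib]
  map_smul' c s := by ext κ; simp [mul_sum, mul_left_comm]

theorem coordSum_apply (lam : ι → ((i : ι) → α i) → ℝ) (s : (i : ι) → α i → ℝ)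
    (κ : (i : ι) → α i) : coordSum lam s κ = ∑ i, lam i κ * s i (κ i) := rfl

variable [∀ i, Fintype (α i)]

theorem eq_zero_of_coordSum_nonneg [∀ i, Nonempty (α i)] {w : (i : ι) → α i → ℝ}
    (hw : ∀ i t, 0 < w i t) {lam : ι → ((i : ι) → α i) → ℝ} (hlam : ∀ i κ, 0 < lam i κ)
    {s : (i : ι) → α i → ℝ} (hs : s ∈ weightedSumZero w) (hnonneg : 0 ≤ coordSum lam s) :
    s = 0 := by
  choose τ hτ using fun i => Finite.exists_min (s i)
  have hτ_nonpos : ∀ i, s i (τ i) ≤ 0 := fun i =>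
    have ⟨t, ht⟩ := exists_nonpos_of_sum_mul_eq_zero (hw i) (hs i)
    (hτ i t).trans ht
  have hterm : ∀ i ∈ univ, lam i τ * s i (τ i) ≤ 0 := fun i _ =>
    mul_nonpos_of_nonneg_of_nonpos (hlam i τ).le (hτ_nonpos i)
  have hτ_zero : ∀ i, s i (τ i) = 0 := fun i =>
    have h := (sum_eq_zero_iff_of_nonpos hterm).1 (le_antisymm (sum_nonpos hterm) (hnonneg τ))
    (mul_eq_zero.1 (h i (mem_univ i))).resolve_left (hlam i τ).ne'
  funext i
  exact eq_zero_of_nonneg_of_sum_mul_eq_zero (hw i)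
    (fun t => (hτ_zero i).symm.trans_le (hτ i t)) (hs i)

variable [DecidableEq ι]

theorem sum_coordSum_single_mul (lam : ι → ((i : ι) → α i) → ℝ) (γ : ((i : ι) → α i) → ℝ)
    (i : ι) (v : α i → ℝ) :
    ∑ κ, coordSum lam (Pi.single i v) κ * γ κ = ∑ κ, lam i κ * v (κ i) * γ κ := by
  refine sum_congr rfl fun κ _ => ?_
  rw [coordSum_apply, Fintype.sum_eq_single i fun j hj => by simp [Pi.single_eq_of_ne hj],
    Pi.single_eq_same]

theorem sum_filter_update_eq [∀ i, DecidableEq (α i)] {M : Type*} [AddCommMonoid M]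
    (f : ((i : ι) → α i) → M) (i : ι) (a b : α i) :
    ∑ κ ∈ univ.filter (fun κ : (i : ι) → α i => κ i = a), f (Function.update κ i b) =
      ∑ κ ∈ univ.filter (fun κ : (i : ι) → α i => κ i = b), f κ := by
  refine sum_nbij' (fun κ => Function.update κ i b) (fun κ => Function.update κ i a)
    (by simp) (by simp) ?_ ?_ fun _ _ => rfl
  · intro κ hκ
    rw [Function.update_idem, ← (mem_filter_univ κ).1 hκ, Function.update_eq_self]
  · intro κ hκ
    rw [Function.update_idem, ← (mem_filter_univ κ).1 hκ, Function.update_eq_self]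

end CoordSum

theorem stmt11_general {m : ℕ} (p : Fin m → ℕ) [∀ φ, NeZero (p φ)]
    (lam : Fin m → ((φ : Fin m) → Fin (p φ)) → ℝ)
    (hlam : ∀ φ κ, 0 < lam φ κ)
    (k : (φ : Fin m) → Fin (p φ) → ℝ)
    (hk : ∀ φ j, j ≠ 0 → 0 < k φ j) :
    ∃ γ : ((φ : Fin m) → Fin (p φ)) → ℝ, (∀ κ, 0 < γ κ) ∧
      ∀ (φ : Fin m) (j : Fin (p φ)), j ≠ 0 →
        (∑ κ ∈ Finset.univ.filter (fun κ : (φ : Fin m) → Fin (p φ) => κ φ = 0),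
            lam φ κ * γ κ) /
          (∑ κ ∈ Finset.univ.filter (fun κ : (φ : Fin m) → Fin (p φ) => κ φ = 0),
            lam φ (Function.update κ φ j) * γ (Function.update κ φ j)) = k φ j := by
  -- the weights for which `δ₀ - k φ j • δⱼ` has weighted sum zero
  let w : (φ : Fin m) → Fin (p φ) → ℝ := fun φ t => if t = 0 then 1 else (k φ t)⁻¹
  have hw : ∀ φ t, 0 < w φ t := fun φ t => by
    by_cases ht : t = 0 <;> simp [w, ht, hk φ t]
  obtain ⟨γ, hγ, hγV⟩ := exists_pos_forall_sum_mul_eq_zero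
    ((weightedSumZero w).map (coordSum lam)) <| by
      rintro _ ⟨s, hs, rfl⟩ hnonneg
      rw [eq_zero_of_coordSum_nonneg hw hlam hs hnonneg, map_zero]
  refine ⟨γ, hγ, fun φ j hj => ?_⟩
  have hmem : Pi.single φ (Pi.single 0 1 - k φ j • Pi.single j 1) ∈ weightedSumZero w := by
    intro ψ
    rcases eq_or_ne ψ φ with rfl | hψ
    · simp [Pi.single_apply, mul_sub, sum_sub_distrib, w, hj, (hk ψ j hj).ne']
    · simp [Pi.single_eq_of_ne hψ]
  have h := hγV _ (Submodule.mem_map_of_mem hmem)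
  rw [sum_coordSum_single_mul] at h
  have hnum : ∑ κ ∈ univ.filter (fun κ : (φ : Fin m) → Fin (p φ) => κ φ = 0), lam φ κ * γ κ =
      k φ j * ∑ κ ∈ univ.filter (fun κ : (φ : Fin m) → Fin (p φ) => κ φ = j), lam φ κ * γ κ := by
    simpa [Pi.single_apply, mul_sub, sub_mul, sum_sub_distrib, mul_sum, sum_filter, sub_eq_zero,
      mul_left_comm, mul_assoc] using h
  have hden : 0 < ∑ κ ∈ univ.filter (fun κ : (φ : Fin m) → Fin (p φ) => κ φ = j),
      lam φ κ * γ κ :=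
    sum_pos (fun κ _ => mul_pos (hlam φ κ) (hγ κ)) ⟨Function.update 0 φ j, by simp⟩
  rw [sum_filter_update_eq (fun κ => lam φ κ * γ κ), hnum, mul_div_cancel_right₀ _ hden.ne']

theorem stmt11 {m : ℕ} (hm : 1 ≤ m) (p : Fin m → ℕ) [∀ φ, NeZero (p φ)]
    (lam : Fin m → ((φ : Fin m) → Fin (p φ)) → ℝ)
    (hlam : ∀ φ κ, 0 < lam φ κ)
    (k : (φ : Fin m) → Fin (p φ) → ℝ)
    (hk : ∀ φ j, j ≠ 0 → 0 < k φ j) :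
    ∃ γ : ((φ : Fin m) → Fin (p φ)) → ℝ, (∀ κ, 0 < γ κ) ∧
      ∀ (φ : Fin m) (j : Fin (p φ)), j ≠ 0 →
        (∑ κ ∈ Finset.univ.filter (fun κ : (φ : Fin m) → Fin (p φ) => κ φ = 0),
            lam φ κ * γ κ) /
          (∑ κ ∈ Finset.univ.filter (fun κ : (φ : Fin m) → Fin (p φ) => κ φ = 0),
            lam φ (Function.update κ φ j) * γ (Function.update κ φ j)) = k φ j :=
  stmt11_general p lam hlam k hk
end

section
/- In the general ratio lemma with m groups, a solution may be constructed with a single free parameter: fixing γ_{(1,1,...,1)} = c for any c > 0 determines all other γ_κ as c times explicit positive constants built from the λ's and k's, and any such choice satisfies all ratio equations; in particular the solution set contains a ray {c·γ* : c > 0} for a fixed positive vector γ*. -/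
open Finset

namespace Stmt12Aux

variable {m : ℕ} (p : Fin m → ℕ) [∀ φ, NeZero (p φ)]
variable (lam : Fin m → ((φ : Fin m) → Fin (p φ)) → ℝ)
variable (k : (φ : Fin m) → Fin (p φ) → ℝ)

/-- Points agreeing with `κ` on all coordinates `< i`. -/
def agr (i : ℕ) (κ : (φ : Fin m) → Fin (p φ)) : Finset ((φ : Fin m) → Fin (p φ)) :=
  Finset.univ.filter (fun x => ∀ ψ : Fin m, (ψ : ℕ) < i → x ψ = κ ψ)

/-- `K φ j = 1/k φ j` for `j ≠ 0`, and `1` for `j = 0`. -/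
noncomputable def Kk (φ : Fin m) (j : Fin (p φ)) : ℝ := if j = 0 then 1 else (k φ j)⁻¹

/-- The tail product of factors, defined by downward recursion on the coordinate index. -/
noncomputable def tp (i : ℕ) (κ : (φ : Fin m) → Fin (p φ)) : ℝ :=
  if h : i < m then
    Kk p k ⟨i, h⟩ (κ ⟨i, h⟩)
      * (∑ x ∈ agr p (i + 1) (Function.update κ ⟨i, h⟩ 0), lam ⟨i, h⟩ x * tp (i + 1) x)
      / (∑ x ∈ agr p (i + 1) κ, lam ⟨i, h⟩ x * tp (i + 1) x)
      * tp (i + 1) κ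
  else 1
termination_by m - i
decreasing_by all_goals omega

/-- Tail sums. -/
noncomputable def R (i : ℕ) (h : i < m) (κ : (φ : Fin m) → Fin (p φ)) : ℝ :=
  ∑ x ∈ agr p (i + 1) κ, lam ⟨i, h⟩ x * tp p lam k (i + 1) x

lemma tp_eq (i : ℕ) (h : i < m) (κ : (φ : Fin m) → Fin (p φ)) :
    tp p lam k i κ = Kk p k ⟨i, h⟩ (κ ⟨i, h⟩)
      * R p lam k i h (Function.update κ ⟨i, h⟩ 0) / R p lam k i h κ * tp p lam k (i + 1) κ := by
  rw [tp, dif_pos h]; rfl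

lemma tp_eq_one (i : ℕ) (h : ¬ i < m) (κ : (φ : Fin m) → Fin (p φ)) :
    tp p lam k i κ = 1 := by
  rw [tp, dif_neg h]

lemma agr_congr {i : ℕ} {κ κ' : (φ : Fin m) → Fin (p φ)}
    (hag : ∀ ψ : Fin m, (ψ : ℕ) < i → κ ψ = κ' ψ) : agr p i κ = agr p i κ' := by
  unfold agr
  apply Finset.filter_congr
  intro x _
  constructor
  · intro hx ψ hψ; rw [hx ψ hψ, hag ψ hψ]
  · intro hx ψ hψ; rw [hx ψ hψ, hag ψ hψ]

lemma mem_agr {i : ℕ} {κ x : (φ : Fin m) → Fin (p φ)} :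
    x ∈ agr p i κ ↔ ∀ ψ : Fin m, (ψ : ℕ) < i → x ψ = κ ψ := by
  simp [agr]

lemma R_congr {i : ℕ} (h : i < m) {κ κ' : (φ : Fin m) → Fin (p φ)}
    (hag : ∀ ψ : Fin m, (ψ : ℕ) < i + 1 → κ ψ = κ' ψ) :
    R p lam k i h κ = R p lam k i h κ' := by
  unfold R; rw [agr_congr p hag]

variable {k} in
lemma Kk_pos (hk : ∀ φ j, j ≠ 0 → 0 < k φ j) (φ : Fin m) (j : Fin (p φ)) :
    0 < Kk p k φ j := by
  unfold Kk
  split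
  · norm_num
  · exact inv_pos.mpr (hk φ j (by assumption))

variable {lam k} in
lemma tp_pos (hlam : ∀ φ κ, 0 < lam φ κ) (hk : ∀ φ j, j ≠ 0 → 0 < k φ j) :
    ∀ i κ, 0 < tp p lam k i κ := by
  have main : ∀ n i, m ≤ i + n → ∀ κ, 0 < tp p lam k i κ := by
    intro n
    induction n with
    | zero =>
      intro i hi κ
      rw [tp_eq_one p lam k i (by omega)]
      norm_num
    | succ n IH =>
      intro i hi κ
      by_cases h : i < m
      · have h1 : ∀ κ', 0 < tp p lam k (i + 1) κ' := fun κ' => IH (i + 1) (by omega) κ'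
        have hR : ∀ κ', 0 < R p lam k i h κ' := by
          intro κ'
          refine Finset.sum_pos (fun x _ => mul_pos (hlam _ _) (h1 x)) ⟨κ', ?_⟩
          exact (mem_agr p).mpr (fun ψ _ => rfl)
        rw [tp_eq p lam k i h]
        exact mul_pos (div_pos (mul_pos (Kk_pos p hk _ _) (hR _)) (hR _)) (h1 κ)
      · rw [tp_eq_one p lam k i h]; norm_num
  exact fun i κ => main m i (by omega) κ

variable {lam k} in
lemma R_pos (hlam : ∀ φ κ, 0 < lam φ κ) (hk : ∀ φ j, j ≠ 0 → 0 < k φ j)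
    {i : ℕ} (h : i < m) (κ : (φ : Fin m) → Fin (p φ)) : 0 < R p lam k i h κ := by
  refine Finset.sum_pos (fun x _ => mul_pos (hlam _ _) (tp_pos p hlam hk _ x)) ⟨κ, ?_⟩
  exact (mem_agr p).mpr (fun ψ _ => rfl)

/-- The slice sums. -/
noncomputable def T (φ : Fin m) (i : ℕ) (j : Fin (p φ)) (κ : (φ : Fin m) → Fin (p φ)) : ℝ :=
  ∑ x ∈ (agr p i κ).filter (fun x => x φ = j), lam φ x * tp p lam k i x

variable {lam k} in
lemma base (hlam : ∀ φ κ, 0 < lam φ κ) (hk : ∀ φ j, j ≠ 0 → 0 < k φ j)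
    (φ : Fin m) (j : Fin (p φ)) (κ : (φ : Fin m) → Fin (p φ)) :
    T p lam k φ (φ : ℕ) j κ
      = Kk p k φ j * R p lam k (φ : ℕ) φ.isLt (Function.update κ φ 0) := by
  have h : (φ : ℕ) < m := φ.isLt
  have hφ : (⟨(φ : ℕ), h⟩ : Fin m) = φ := rfl
  have hset : (agr p (φ : ℕ) κ).filter (fun x => x φ = j)
      = agr p ((φ : ℕ) + 1) (Function.update κ φ j) := by
    ext x
    simp only [Finset.mem_filter, mem_agr]
    constructor
    · rintro ⟨hx, hxφ⟩ ψ hψ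
      by_cases hψφ : ψ = φ
      · subst hψφ; rw [hxφ, Function.update_self]
      · rw [Function.update_of_ne hψφ]
        have hne : (ψ : ℕ) ≠ (φ : ℕ) := fun e => hψφ (Fin.ext e)
        exact hx ψ (by omega)
    · intro hx
      constructor
      · intro ψ hψ
        have hψφ : ψ ≠ φ := fun e => by subst e; omega
        have := hx ψ (by omega)
        rwa [Function.update_of_ne hψφ] at this
      · have := hx φ (by omega)
        rwa [Function.update_self] at this
  rw [T, hset]
  have hterm : ∀ x ∈ agr p ((φ : ℕ) + 1) (Function.update κ φ j),
      lam φ x * tp p lam k (φ : ℕ) x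
        = (Kk p k φ j * R p lam k (φ : ℕ) h (Function.update κ φ 0)
            / R p lam k (φ : ℕ) h (Function.update κ φ j))
          * (lam φ x * tp p lam k ((φ : ℕ) + 1) x) := by
    intro x hx
    rw [mem_agr] at hx
    have hxφ : x φ = j := by
      have := hx φ (by omega); rwa [Function.update_self] at this
    rw [tp_eq p lam k (φ : ℕ) h x]
    have h1 : R p lam k (φ : ℕ) h x = R p lam k (φ : ℕ) h (Function.update κ φ j) :=
      R_congr p lam k h (fun ψ hψ => hx ψ hψ)
    have h2 : R p lam k (φ : ℕ) h (Function.update x (⟨(φ : ℕ), h⟩ : Fin m) 0)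
        = R p lam k (φ : ℕ) h (Function.update κ φ 0) := by
      refine R_congr p lam k h (fun ψ hψ => ?_)
      by_cases hψφ : ψ = φ
      · subst hψφ; rw [hφ, Function.update_self, Function.update_self]
      · rw [hφ, Function.update_of_ne hψφ, Function.update_of_ne hψφ]
        have := hx ψ hψ
        rw [Function.update_of_ne hψφ] at this
        have hψlt : (ψ : ℕ) < (φ : ℕ) := by
          rcases lt_or_eq_of_le (Nat.lt_succ_iff.mp hψ) with h' | h'
          · exact h'
          · exact absurd (Fin.ext h') hψφ
        rw [this]
    rw [hφ] at *
    rw [hxφ, h1, h2]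
    ring
  rw [Finset.sum_congr rfl hterm, ← Finset.mul_sum]
  have hRj : R p lam k (φ : ℕ) h (Function.update κ φ j)
      = ∑ x ∈ agr p ((φ : ℕ) + 1) (Function.update κ φ j),
          lam φ x * tp p lam k ((φ : ℕ) + 1) x := by
    rw [R]
  rw [← hRj]
  rw [div_mul_cancel₀]
  exact (R_pos p hlam hk h _).ne'

variable {lam k} in
lemma step (hlam : ∀ φ κ, 0 < lam φ κ) (hk : ∀ φ j, j ≠ 0 → 0 < k φ j)
    (φ : Fin m) (j : Fin (p φ)) {i : ℕ} (hi : i < (φ : ℕ)) (κ : (φ : Fin m) → Fin (p φ)) :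
    T p lam k φ i j κ
      = ∑ t : Fin (p ⟨i, lt_trans hi φ.isLt⟩),
          (Kk p k ⟨i, lt_trans hi φ.isLt⟩ t
            * R p lam k i (lt_trans hi φ.isLt)
                (Function.update κ ⟨i, lt_trans hi φ.isLt⟩ 0)
            / R p lam k i (lt_trans hi φ.isLt)
                (Function.update κ ⟨i, lt_trans hi φ.isLt⟩ t))
          * T p lam k φ (i + 1) j (Function.update κ ⟨i, lt_trans hi φ.isLt⟩ t) := by
  have h : i < m := lt_trans hi φ.isLt
  set φi : Fin m := ⟨i, h⟩ with hφi
  have hφiφ : φi ≠ φ := by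
    intro e
    rw [← e] at hi
    simp [hφi] at hi
  rw [T]
  rw [← Finset.sum_fiberwise_of_maps_to (g := fun x => x φi) (t := Finset.univ)
      (fun x _ => Finset.mem_univ _)]
  refine Finset.sum_congr rfl (fun t _ => ?_)
  have hset : ((agr p i κ).filter (fun x => x φ = j)).filter (fun x => x φi = t)
      = (agr p (i + 1) (Function.update κ φi t)).filter (fun x => x φ = j) := by
    ext x
    simp only [Finset.mem_filter, mem_agr]
    constructor
    · rintro ⟨⟨hx, hxφ⟩, hxφi⟩
      refine ⟨?_, hxφ⟩
      intro ψ hψ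
      by_cases hψφi : ψ = φi
      · subst hψφi; rw [hxφi, Function.update_self]
      · rw [Function.update_of_ne hψφi]
        refine hx ψ ?_
        rcases lt_or_eq_of_le (Nat.lt_succ_iff.mp hψ) with h' | h'
        · exact h'
        · exact absurd (Fin.ext (by simpa [hφi] using h')) hψφi
    · rintro ⟨hx, hxφ⟩
      have hxφi : x φi = t := by
        have := hx φi (by simp [hφi])
        rwa [Function.update_self] at this
      refine ⟨⟨?_, hxφ⟩, hxφi⟩
      intro ψ hψ
      have hψφi : ψ ≠ φi := by
        intro e; subst e; exact absurd hψ (by simp [hφi])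
      have := hx ψ (by omega)
      rwa [Function.update_of_ne hψφi] at this
  rw [hset, T, Finset.mul_sum]
  refine Finset.sum_congr rfl (fun x hx => ?_)
  rw [Finset.mem_filter, mem_agr] at hx
  obtain ⟨hx, hxφ⟩ := hx
  have hxφi : x φi = t := by
    have := hx φi (by simp [hφi]); rwa [Function.update_self] at this
  rw [tp_eq p lam k i h x]
  have h1 : R p lam k i h x = R p lam k i h (Function.update κ φi t) :=
    R_congr p lam k h (fun ψ hψ => hx ψ hψ)
  have h2 : R p lam k i h (Function.update x φi 0) = R p lam k i h (Function.update κ φi 0) := by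
    refine R_congr p lam k h (fun ψ hψ => ?_)
    by_cases hψφi : ψ = φi
    · subst hψφi; rw [Function.update_self, Function.update_self]
    · rw [Function.update_of_ne hψφi, Function.update_of_ne hψφi]
      have := hx ψ hψ
      rwa [Function.update_of_ne hψφi] at this
  have hφieta : (⟨i, h⟩ : Fin m) = φi := rfl
  rw [hφieta, hxφi, h1, h2]
  ring

variable {lam k} in
lemma key (hlam : ∀ φ κ, 0 < lam φ κ) (hk : ∀ φ j, j ≠ 0 → 0 < k φ j)
    (φ : Fin m) (j : Fin (p φ)) :
    ∀ n i, i ≤ (φ : ℕ) → (φ : ℕ) - i = n → ∀ κ,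
      T p lam k φ i j κ = Kk p k φ j * T p lam k φ i 0 κ := by
  intro n
  induction n with
  | zero =>
    intro i hi hn κ
    have : i = (φ : ℕ) := by omega
    subst this
    rw [base p hlam hk φ j κ, base p hlam hk φ 0 κ]
    have : Kk p k φ 0 = 1 := by simp [Kk]
    rw [this, one_mul]
  | succ n IH =>
    intro i hi hn κ
    have hiφ : i < (φ : ℕ) := by omega
    rw [step p hlam hk φ j hiφ κ, step p hlam hk φ 0 hiφ κ, Finset.mul_sum]
    refine Finset.sum_congr rfl (fun t _ => ?_)
    rw [IH (i + 1) (by omega) (by omega)]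
    ring

end Stmt12Aux

open Stmt12Aux in
theorem stmt12 {m : ℕ} (hm : 1 ≤ m) (p : Fin m → ℕ) [∀ φ, NeZero (p φ)]
    (lam : Fin m → ((φ : Fin m) → Fin (p φ)) → ℝ)
    (hlam : ∀ φ κ, 0 < lam φ κ)
    (k : (φ : Fin m) → Fin (p φ) → ℝ)
    (hk : ∀ φ j, j ≠ 0 → 0 < k φ j) :
    ∃ γstar : ((φ : Fin m) → Fin (p φ)) → ℝ, (∀ κ, 0 < γstar κ) ∧
      ∀ c : ℝ, 0 < c →
        (∀ κ, 0 < c * γstar κ) ∧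
        ∀ (φ : Fin m) (j : Fin (p φ)), j ≠ 0 →
          (∑ κ ∈ Finset.univ.filter (fun κ : (φ : Fin m) → Fin (p φ) => κ φ = 0),
              lam φ κ * (c * γstar κ)) /
            (∑ κ ∈ Finset.univ.filter (fun κ : (φ : Fin m) → Fin (p φ) => κ φ = 0),
              lam φ (Function.update κ φ j) * (c * γstar (Function.update κ φ j))) = k φ j := by
  refine ⟨tp p lam k 0, fun κ => tp_pos p hlam hk 0 κ, fun c hc => ⟨fun κ =>
    mul_pos hc (tp_pos p hlam hk 0 κ), ?_⟩⟩
  intro φ j hj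
  set κ₀ : (φ : Fin m) → Fin (p φ) := fun _ => 0 with hκ₀
  have hagr0 : ∀ κ, agr p 0 κ = Finset.univ := by
    intro κ; rw [agr]; simp
  -- numerator
  have hnum : (∑ κ ∈ Finset.univ.filter (fun κ : (φ : Fin m) → Fin (p φ) => κ φ = 0),
      lam φ κ * (c * tp p lam k 0 κ)) = c * T p lam k φ 0 0 κ₀ := by
    rw [T, hagr0, Finset.mul_sum]
    exact Finset.sum_congr rfl (fun x _ => by ring)
  -- denominator: reindex by update at φ
  have hden : (∑ κ ∈ Finset.univ.filter (fun κ : (φ : Fin m) → Fin (p φ) => κ φ = 0),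
      lam φ (Function.update κ φ j) * (c * tp p lam k 0 (Function.update κ φ j)))
      = c * T p lam k φ 0 j κ₀ := by
    rw [T, hagr0, Finset.mul_sum]
    refine Finset.sum_nbij' (i := fun x => Function.update x φ j)
      (j := fun x => Function.update x φ 0) ?_ ?_ ?_ ?_ ?_
    · intro a ha
      simp only [Finset.mem_filter, Finset.mem_univ, true_and] at *
      simp [Function.update_self]
    · intro a ha
      simp only [Finset.mem_filter, Finset.mem_univ, true_and] at *
      simp [Function.update_self]
    · intro a ha
      simp only [Finset.mem_filter, Finset.mem_univ, true_and] at ha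
      funext ψ
      by_cases hψ : ψ = φ
      · subst hψ; rw [Function.update_self, ha]
      · rw [Function.update_of_ne hψ, Function.update_of_ne hψ]
    · intro a ha
      simp only [Finset.mem_filter, Finset.mem_univ, true_and] at ha
      funext ψ
      by_cases hψ : ψ = φ
      · subst hψ; rw [Function.update_self, ha]
      · rw [Function.update_of_ne hψ, Function.update_of_ne hψ]
    · intro a ha
      ring
  rw [hnum, hden]
  have hkey : T p lam k φ 0 j κ₀ = Kk p k φ j * T p lam k φ 0 0 κ₀ :=
    key p hlam hk φ j (φ : ℕ) 0 (Nat.zero_le _) rfl κ₀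
  have hT0 : 0 < T p lam k φ 0 0 κ₀ := by
    refine Finset.sum_pos (fun x _ => mul_pos (hlam _ _) (tp_pos p hlam hk 0 x)) ⟨κ₀, ?_⟩
    rw [Finset.mem_filter]
    exact ⟨by rw [hagr0]; exact Finset.mem_univ _, rfl⟩
  rw [hkey]
  have hKk : Kk p k φ j = (k φ j)⁻¹ := by rw [Kk, if_neg hj]
  rw [hKk]
  field_simp
end
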